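/- The grafting operations are monotone for the Tamari order: if x′ ≤ x in Y_m and y′ ≤ y in Y_n, then x′/y′ ≤ x/y and x′∖y′ ≤ x∖y in Y_{m+n}. Moreover x/y ≤ x∖y for all x ∈ Y_m and y ∈ Y_n (so the Tamari interval [x/y, x∖y] is nonempty). -/

import Mathlib

/-- A planar binary tree: either the trivial tree (a leaf) or an ordered pair of
planar binary trees. -/
inductive PBT : Type
  | leaf : PBT
  | node : PBT → PBT → PBT
  deriving DecidableEq

namespace PBT

/-- Number of internal vertices of a planar binary tree. -/
def size : PBT → ℕ
  | leaf => 0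
  | node a b => a.size + b.size + 1

/-- One covering move of the Tamari order: `Rot x y` holds when `y` is obtained
from `x` by replacing some subtree of the form `((a,b),c)` by `(a,(b,c))`. -/
inductive Rot : PBT → PBT → Prop
  | rot (a b c : PBT) : Rot (node (node a b) c) (node a (node b c))
  | left {a a' : PBT} (b : PBT) : Rot a a' → Rot (node a b) (node a' b)
  | right (a : PBT) {b b' : PBT} : Rot b b' → Rot (node a b) (node a b')

/-- The Tamari order: reflexive-transitive closure of `Rot`. -/
def tle (x y : PBT) : Prop := Relation.ReflTransGen Rot x y

/-- Grafting of `x` on the leftmost leaf of `y` : the operation `x / y`. -/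
def overT : PBT → PBT → PBT
  | x, leaf => x
  | x, node y₁ y₂ => node (overT x y₁) y₂

/-- Grafting of `y` on the rightmost leaf of `x` : the operation `x ∖ y`. -/
def under : PBT → PBT → PBT
  | leaf, y => y
  | node x₁ x₂, y => node x₁ (under x₂ y)

theorem Rot.size_eq {x y : PBT} (h : Rot x y) : x.size = y.size := by
  induction h <;> simp [size] <;> omega

theorem tle.size_eq {x y : PBT} (h : tle x y) : x.size = y.size := by
  induction h with
  | refl => rfl
  | tail _ h ih => rw [ih, h.size_eq]

theorem finite_size_le (n : ℕ) : {z : PBT | z.size ≤ n}.Finite := by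
  induction n with
  | zero =>
    apply Set.Finite.subset (Set.finite_singleton leaf)
    rintro (_ | ⟨a, b⟩) hz
    · simp
    · simp [size] at hz
  | succ n ih =>
    apply Set.Finite.subset ((Set.Finite.image2 node ih ih).insert leaf)
    rintro (_ | ⟨a, b⟩) hz
    · simp
    · simp only [Set.mem_setOf_eq, size] at hz
      exact Set.mem_insert_iff.mpr
        (Or.inr (Set.mem_image2.mpr ⟨a, by simp only [Set.mem_setOf_eq]; omega, b, by simp only [Set.mem_setOf_eq]; omega, rfl⟩))

theorem finite_size (n : ℕ) : {z : PBT | z.size = n}.Finite :=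
  (finite_size_le n).subset fun _ hz => le_of_eq hz

theorem finite_tle_right (x : PBT) : {y : PBT | tle y x}.Finite :=
  (finite_size x.size).subset fun _ hy => hy.size_eq

theorem finite_tle_left (x : PBT) : {y : PBT | tle x y}.Finite :=
  (finite_size x.size).subset fun _ hy => hy.size_eq.symm

theorem finite_interval (x y : PBT) :
    {z : PBT | tle (overT x y) z ∧ tle z (under x y)}.Finite :=
  (finite_tle_right (under x y)).subset fun _ hz => hz.2

end PBT

/-- The free abelian group `ℤY = ⊕ₙ ℤYₙ` on the set of all planar binary trees. -/
abbrev ZY : Type := PBT →₀ ℤ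

namespace PBT

/-- The basis element `S_x` of `ℤY`. -/
noncomputable def S (x : PBT) : ZY := Finsupp.single x 1

/-- The class `P_x = ∑_{y ≤ x} S_y` of the projective module. -/
noncomputable def P (x : PBT) : ZY := ∑ y ∈ (finite_tle_right x).toFinset, S y

/-- The class `I_x = ∑_{y ≥ x} S_y` of the injective module. -/
noncomputable def I (x : PBT) : ZY := ∑ y ∈ (finite_tle_left x).toFinset, S y

/-- The Loday-Ronco product on basis elements:
`S_x * S_y = ∑_{x/y ≤ z ≤ x∖y} S_z`. -/
noncomputable def starB (x y : PBT) : ZY := ∑ z ∈ (finite_interval x y).toFinset, S z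

/-- Bilinear extension of a product defined on basis elements. -/
noncomputable def bilin (f : PBT → PBT → ZY) (a b : ZY) : ZY :=
  a.sum fun x ax => b.sum fun y byy => (ax * byy) • f x y

/-- The product `/` on `ℤY`, with `S_x / S_y = S_{x/y}`. -/
noncomputable def overM : ZY → ZY → ZY := bilin fun x y => S (x.overT y)

/-- The product `∖` on `ℤY`, with `S_x ∖ S_y = S_{x∖y}`. -/
noncomputable def underM : ZY → ZY → ZY := bilin fun x y => S (x.under y)

/-- The Loday-Ronco product `*` on `ℤY`. -/
noncomputable def starM : ZY → ZY → ZY := bilin starB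

/-- The unique planar binary tree `•` with one internal vertex. -/
def dot : PBT := node leaf leaf

end PBT

/-!
A rotation site `((a,b),c)` of `y` is still a rotation site of `x/y`, with `a` replaced by
`x/a` when it lies on the left arm of `y`, and dually for `x∖y`; in the other argument the
grafted tree just sits in a subtree position, where the Tamari order is a congruence.
For `x/y ≤ x∖y`, induct on `y = (y₁,y₂)`: `(x/y₁, y₂) ≤ (x∖y₁, y₂)`, and the latter
reaches `x∖(y₁,y₂)` by one rotation at each vertex of the right arm of `x`.
-/

namespace PBT

variable {a a' b b' x x' y y' : PBT}

theorem tle_refl (x : PBT) : tle x x := Relation.ReflTransGen.refl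

theorem tle.trans (h : tle x y) (h' : tle y y') : tle x y' :=
  Relation.ReflTransGen.trans h h'

theorem tle.node_left (b : PBT) (h : tle a a') : tle (node a b) (node a' b) :=
  Relation.ReflTransGen.lift (node · b) (fun _ _ => Rot.left b) _ _ h

theorem tle.node_right (a : PBT) (h : tle b b') : tle (node a b) (node a b') :=
  Relation.ReflTransGen.lift (node a) (fun _ _ => Rot.right a) _ _ h

theorem under_leaf_right (x : PBT) : under x leaf = x := by
  induction x with
  | leaf => rfl
  | node a b _ ih => rw [under, ih]

theorem Rot.overT_right (x : PBT) (h : Rot y y') : Rot (overT x y) (overT x y') := by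
  induction h with
  | rot a b c => exact Rot.rot (overT x a) b c
  | left b _ ih => exact Rot.left b ih
  | right a h _ => exact Rot.right (overT x a) h

theorem Rot.under_left (y : PBT) (h : Rot x x') : Rot (under x y) (under x' y) := by
  induction h with
  | rot a b c => exact Rot.rot a b (under c y)
  | left b h _ => exact Rot.left (under b y) h
  | right a _ ih => exact Rot.right a ih

theorem tle.overT_left (y : PBT) (h : tle x x') : tle (overT x y) (overT x' y) := by
  induction y with
  | leaf => exact h
  | node _ b ih => exact ih.node_left b

theorem tle.overT_right (x : PBT) (h : tle y y') : tle (overT x y) (overT x y') :=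
  Relation.ReflTransGen.lift (overT x) (fun _ _ => Rot.overT_right x) _ _ h

theorem tle.under_left (y : PBT) (h : tle x x') : tle (under x y) (under x' y) :=
  Relation.ReflTransGen.lift (under · y) (fun _ _ => Rot.under_left y) _ _ h

theorem tle.under_right (x : PBT) (h : tle y y') : tle (under x y) (under x y') := by
  induction x with
  | leaf => exact h
  | node a _ _ ih => exact ih.node_right a

theorem overT_mono (hx : tle x' x) (hy : tle y' y) : tle (overT x' y') (overT x y) :=
  (hx.overT_left y').trans (hy.overT_right x)

theorem under_mono (hx : tle x' x) (hy : tle y' y) : tle (under x' y') (under x y) :=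
  (hx.under_left y').trans (hy.under_right x)

theorem node_under_le_under_node (x y₁ y₂ : PBT) :
    tle (node (under x y₁) y₂) (under x (node y₁ y₂)) := by
  induction x with
  | leaf => exact tle_refl _
  | node a b _ ih => exact .head (Rot.rot a (under b y₁) y₂) (ih.node_right a)

theorem overT_le_under (x y : PBT) : tle (overT x y) (under x y) := by
  induction y with
  | leaf => rw [under_leaf_right]; exact tle_refl x
  | node y₁ y₂ ih _ => exact (ih.node_left y₂).trans (node_under_le_under_node x y₁ y₂)

end PBT

open PBT in
/-- Grafting operations are monotone for the Tamari order, and `x/y ≤ x∖y`. -/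
theorem graft_monotone_and_interval_nonempty :
    (∀ x x' y y' : PBT, tle x' x → tle y' y →
      tle (x'.overT y') (x.overT y) ∧ tle (x'.under y') (x.under y)) ∧
    (∀ x y : PBT, tle (x.overT y) (x.under y)) :=
  ⟨fun _ _ _ _ hx hy => ⟨overT_mono hx hy, under_mono hx hy⟩, overT_le_under⟩
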